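/- arXiv:1910.04780 — 7 statements merged into one kernel-verified Lean document; each statement's English description precedes it below -/
import Mathlib

section
/- Let n ≥ 1 and let λ, μ ∈ ℤⁿ be weakly decreasing (λ_1 ≥ λ_2 ≥ ... ≥ λ_n and μ_1 ≥ μ_2 ≥ ... ≥ μ_n). Then the family of partial-sum inequalities ∑_{i=1}^{k} λ_i ≤ ∑_{i=1}^{k} μ_i for all 1 ≤ k ≤ n holds if and only if for every integer r one has ∑_{i : λ_i ≥ r} (λ_i − r) ≤ ∑_{i : μ_i ≥ r} (μ_i − r). -/
lemma level_sum_eq_max {n : ℕ} (f : Fin n → ℤ) (r : ℤ) :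
    ∑ i ∈ Finset.univ.filter (fun i : Fin n => r ≤ f i), (f i - r)
      = ∑ i : Fin n, max (f i - r) 0 := by
  rw [Finset.sum_filter]
  refine Finset.sum_congr rfl fun i _ => ?_
  rcases le_or_gt r (f i) with h | h
  · rw [if_pos h, max_eq_left (by linarith)]
  · rw [if_neg (not_le.mpr h), max_eq_right (by linarith)]

lemma filter_le_card {n : ℕ} (i : Fin n) :
    (Finset.univ.filter (fun j : Fin n => j ≤ i)).card = (i : ℕ) + 1 := by
  rw [show Finset.univ.filter (fun j : Fin n => j ≤ i) = Finset.Iic i by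
    ext j; simp]
  exact Fin.card_Iic i

lemma filter_ge_eq_init {n : ℕ} (f : Fin n → ℤ) (hf : Antitone f) (r : ℤ) :
    Finset.univ.filter (fun i : Fin n => r ≤ f i)
      = Finset.univ.filter (fun i : Fin n =>
          (i : ℕ) < (Finset.univ.filter (fun i : Fin n => r ≤ f i)).card) := by
  set S := Finset.univ.filter (fun i : Fin n => r ≤ f i) with hS
  have hdc : ∀ i j : Fin n, j ≤ i → i ∈ S → j ∈ S := by
    intro i j hji hi
    simp only [hS, Finset.mem_filter, Finset.mem_univ, true_and] at hi ⊢
    exact le_trans hi (hf hji)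
  ext i
  simp only [Finset.mem_filter, Finset.mem_univ, true_and]
  constructor
  · intro hi
    have hsub : Finset.univ.filter (fun j : Fin n => j ≤ i) ⊆ S := by
      intro j hj
      simp only [Finset.mem_filter, Finset.mem_univ, true_and] at hj
      exact hdc i j hj (by simpa [hS] using hi)
    have := Finset.card_le_card hsub
    rw [filter_le_card] at this
    omega
  · intro hi
    by_contra hnot
    have hsub : S ⊆ Finset.univ.filter (fun j : Fin n => (j : ℕ) < (i : ℕ)) := by
      intro j hj
      simp only [Finset.mem_filter, Finset.mem_univ, true_and]
      by_contra hji
      exact hnot (by simpa [hS] using hdc j i (by omega) hj)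
    have h2 := Finset.card_le_card hsub
    have h3 : (Finset.univ.filter (fun j : Fin n => (j : ℕ) < (i : ℕ))).card ≤ (i : ℕ) := by
      rcases Nat.eq_zero_or_pos (i : ℕ) with h0 | h0
      · simp [h0]
      · have : Finset.univ.filter (fun j : Fin n => (j : ℕ) < (i : ℕ))
            ⊆ Finset.univ.filter (fun j : Fin n => j ≤ (⟨(i:ℕ)-1, by omega⟩ : Fin n)) := by
          intro j hj
          simp only [Finset.mem_filter, Finset.mem_univ, true_and] at hj ⊢
          rw [Fin.le_def]; simp; omega
        have := Finset.card_le_card this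
        rw [filter_le_card] at this
        simp only [Fin.val_mk] at this
        omega
    omega

/-- Lemma A.4 of the paper: for weakly decreasing `λ, μ ∈ ℤⁿ`, the partial-sum
inequalities `∑_{i=1}^k λ_i ≤ ∑_{i=1}^k μ_i` for all `1 ≤ k ≤ n` hold if and only if for every
integer `r` one has `∑_{i : λ_i ≥ r} (λ_i − r) ≤ ∑_{i : μ_i ≥ r} (μ_i − r)`. -/
theorem partial_sums_iff_level_sums (n : ℕ) (hn : 1 ≤ n) (lam mu : Fin n → ℤ)
    (hlam : Antitone lam) (hmu : Antitone mu) :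
    (∀ k : ℕ, 1 ≤ k → k ≤ n →
        ∑ i ∈ Finset.univ.filter (fun i : Fin n => (i : ℕ) < k), lam i ≤
          ∑ i ∈ Finset.univ.filter (fun i : Fin n => (i : ℕ) < k), mu i)
    ↔ (∀ r : ℤ,
        ∑ i ∈ Finset.univ.filter (fun i : Fin n => r ≤ lam i), (lam i - r) ≤
          ∑ i ∈ Finset.univ.filter (fun i : Fin n => r ≤ mu i), (mu i - r)) := by
  constructor
  · intro h r
    set m := (Finset.univ.filter (fun i : Fin n => r ≤ lam i)).card with hm
    have hRHSnn : (0:ℤ) ≤ ∑ i ∈ Finset.univ.filter (fun i : Fin n => r ≤ mu i), (mu i - r) := by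
      refine Finset.sum_nonneg fun i hi => ?_
      simp only [Finset.mem_filter] at hi
      linarith [hi.2]
    rcases Nat.eq_zero_or_pos m with h0 | h0
    · have hempty : Finset.univ.filter (fun i : Fin n => r ≤ lam i) = ∅ :=
        Finset.card_eq_zero.mp (by rw [← hm]; exact h0)
      rw [hempty]
      simpa using hRHSnn
    · have hmn : m ≤ n := by
        have := Finset.card_filter_le Finset.univ (fun i : Fin n => r ≤ lam i)
        simpa using this
      calc ∑ i ∈ Finset.univ.filter (fun i : Fin n => r ≤ lam i), (lam i - r)
          = ∑ i ∈ Finset.univ.filter (fun i : Fin n => (i : ℕ) < m), (lam i - r) := by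
            rw [hm, ← filter_ge_eq_init lam hlam r]
        _ ≤ ∑ i ∈ Finset.univ.filter (fun i : Fin n => (i : ℕ) < m), (mu i - r) := by
            rw [Finset.sum_sub_distrib, Finset.sum_sub_distrib]
            exact sub_le_sub_right (h m h0 hmn) _
        _ ≤ ∑ i ∈ Finset.univ.filter (fun i : Fin n => (i : ℕ) < m), max (mu i - r) 0 :=
            Finset.sum_le_sum fun i _ => le_max_left _ _
        _ ≤ ∑ i : Fin n, max (mu i - r) 0 :=
            Finset.sum_le_sum_of_subset_of_nonneg (Finset.filter_subset _ _)
              (fun i _ _ => le_max_right _ _)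
        _ = ∑ i ∈ Finset.univ.filter (fun i : Fin n => r ≤ mu i), (mu i - r) :=
            (level_sum_eq_max mu r).symm
  · intro h k hk1 hkn
    set j : Fin n := ⟨k - 1, by omega⟩ with hj
    set r := mu j with hr
    have claimA : ∑ i ∈ Finset.univ.filter (fun i : Fin n => r ≤ mu i), (mu i - r)
        = ∑ i ∈ Finset.univ.filter (fun i : Fin n => (i : ℕ) < k), (mu i - r) := by
      rw [level_sum_eq_max,
        ← Finset.sum_filter_add_sum_filter_not Finset.univ (fun i : Fin n => (i : ℕ) < k)]
      have h2 : ∑ i ∈ Finset.univ.filter (fun i : Fin n => ¬ (i : ℕ) < k), max (mu i - r) 0 = 0 := by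
        refine Finset.sum_eq_zero fun i hi => ?_
        simp only [Finset.mem_filter, not_lt] at hi
        have : mu i ≤ r := hmu (by rw [Fin.le_def]; simp [hj]; omega)
        rw [max_eq_right (by linarith)]
      rw [h2, add_zero]
      refine Finset.sum_congr rfl fun i hi => ?_
      simp only [Finset.mem_filter] at hi
      have : r ≤ mu i := hmu (by rw [Fin.le_def]; simp [hj]; omega)
      rw [max_eq_left (by linarith)]
    have claimB : ∑ i ∈ Finset.univ.filter (fun i : Fin n => (i : ℕ) < k), (lam i - r)
        ≤ ∑ i ∈ Finset.univ.filter (fun i : Fin n => r ≤ lam i), (lam i - r) := by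
      rw [level_sum_eq_max]
      calc ∑ i ∈ Finset.univ.filter (fun i : Fin n => (i : ℕ) < k), (lam i - r)
          ≤ ∑ i ∈ Finset.univ.filter (fun i : Fin n => (i : ℕ) < k), max (lam i - r) 0 :=
            Finset.sum_le_sum fun i _ => le_max_left _ _
        _ ≤ ∑ i : Fin n, max (lam i - r) 0 :=
            Finset.sum_le_sum_of_subset_of_nonneg (Finset.filter_subset _ _)
              (fun i _ _ => le_max_right _ _)
    have key : ∑ i ∈ Finset.univ.filter (fun i : Fin n => (i : ℕ) < k), (lam i - r)
        ≤ ∑ i ∈ Finset.univ.filter (fun i : Fin n => (i : ℕ) < k), (mu i - r) :=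
      le_trans claimB (le_trans (h r) (le_of_eq claimA))
    rw [Finset.sum_sub_distrib, Finset.sum_sub_distrib] at key
    linarith
end

section
/- Let k ≥ 2 and let X_1, ..., X_k be indeterminates. Then in the polynomial ring ℤ[X_1, ..., X_k] one has ∑_{l=1}^{k} (−1)^l ∏_{1 ≤ m < n ≤ k, m ≠ l, n ≠ l} (X_m − X_n) = 0, where for each l the product ranges over all pairs m < n with both m and n different from l. -/
open MvPolynomial Finset

variable {R : Type*} [CommRing R]

lemma prod_pairs {m : ℕ} (g : Fin m → Fin m → R) :
    ∏ p ∈ Finset.univ.filter (fun p : Fin m × Fin m => p.1 < p.2), g p.1 p.2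
      = ∏ i, ∏ j ∈ Finset.Ioi i, g i j := by
  rw [Finset.prod_filter, ← Finset.univ_product_univ,
    Finset.prod_product' (f := fun a b => if a < b then g a b else 1)]
  refine Finset.prod_congr rfl fun i _ => ?_
  rw [← Finset.prod_filter]
  congr 1
  ext j; simp

lemma reindex_pairs {n : ℕ} (l : Fin (n + 2)) (g : Fin (n+2) → Fin (n+2) → R) :
    ∏ p ∈ Finset.univ.filter
        (fun p : Fin (n+2) × Fin (n+2) => p.1 < p.2 ∧ p.1 ≠ l ∧ p.2 ≠ l),
      g p.1 p.2
      = ∏ p ∈ Finset.univ.filter (fun p : Fin (n+1) × Fin (n+1) => p.1 < p.2),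
          g (l.succAbove p.1) (l.succAbove p.2) := by
  refine (Finset.prod_bij (fun p _ => (l.succAbove p.1, l.succAbove p.2)) ?_ ?_ ?_ ?_).symm
  · intro p hp
    simp only [Finset.mem_filter, Finset.mem_univ, true_and] at hp ⊢
    exact ⟨Fin.succAbove_lt_succAbove_iff.mpr hp, Fin.succAbove_ne _ _, Fin.succAbove_ne _ _⟩
  · intro p hp q hq h
    simp only [Prod.mk.injEq] at h
    exact Prod.ext (Fin.succAbove_right_injective h.1) (Fin.succAbove_right_injective h.2)
  · intro p hp
    simp only [Finset.mem_filter, Finset.mem_univ, true_and] at hp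
    obtain ⟨hlt, h1, h2⟩ := hp
    obtain ⟨a, ha⟩ := Fin.exists_succAbove_eq h1
    obtain ⟨b, hb⟩ := Fin.exists_succAbove_eq h2
    refine ⟨(a, b), by simpa using Fin.succAbove_lt_succAbove_iff.mp (by rw [ha, hb]; exact hlt), by simp [ha, hb]⟩
  · intros; rfl

/-- for `k ≥ 2`, in `ℤ[X_1, ..., X_k]` one has
`∑_{l=1}^k (−1)^l ∏_{m<n, m≠l, n≠l} (X_m − X_n) = 0`.
Indices are realized as `Fin k` (so the paper's index `l ∈ {1,...,k}` is `(l : ℕ) + 1` for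
`l : Fin k`, whence the sign `(−1)^{(l:ℕ)+1}`). -/
theorem alternating_vandermonde_sum_eq_zero (k : ℕ) (hk : 2 ≤ k) :
    ∑ l : Fin k,
        (-1 : MvPolynomial (Fin k) ℤ) ^ ((l : ℕ) + 1) *
          ∏ p ∈ Finset.univ.filter
              (fun p : Fin k × Fin k => p.1 < p.2 ∧ p.1 ≠ l ∧ p.2 ≠ l),
            (X p.1 - X p.2) = 0 := by
  obtain ⟨n, rfl⟩ : ∃ n, k = n + 2 := ⟨k - 2, by omega⟩
  set R := MvPolynomial (Fin (n+2)) ℤ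
  set A : Matrix (Fin (n+2)) (Fin (n+2)) R :=
    Matrix.of fun i j => if j = 0 then 1 else X i ^ ((j : ℕ) - 1) with hAdef
  have hA : A.det = 0 := by
    refine Matrix.det_zero_of_column_eq (i := 0) (j := 1) Fin.zero_ne_one fun r => ?_
    simp [hAdef]
  rw [Matrix.det_succ_column_zero] at hA
  have hminor : ∀ l : Fin (n+2),
      (A.submatrix l.succAbove Fin.succ).det
        = ∏ i, ∏ j ∈ Finset.Ioi i, (X (l.succAbove j) - X (l.succAbove i) : R) := by
    intro l
    have : A.submatrix l.succAbove Fin.succ = Matrix.vandermonde (fun i => X (l.succAbove i)) := by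
      ext i j
      simp [hAdef, Matrix.vandermonde, Fin.succ_ne_zero]
    rw [this, Matrix.det_vandermonde]
  set c : R := ∏ i : Fin (n+1), (-1 : R) ^ (Finset.Ioi i).card with hc
  have key : ∀ l : Fin (n+2),
      (∏ p ∈ Finset.univ.filter
          (fun p : Fin (n+2) × Fin (n+2) => p.1 < p.2 ∧ p.1 ≠ l ∧ p.2 ≠ l),
        (X p.1 - X p.2 : R))
      = c * ∏ i, ∏ j ∈ Finset.Ioi i, (X (l.succAbove j) - X (l.succAbove i) : R) := by
    intro l
    rw [reindex_pairs l (fun a b => (X a - X b : R)), prod_pairs (fun a b => (X (l.succAbove a) - X (l.succAbove b) : R)), hc, ← Finset.prod_mul_distrib]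
    refine Finset.prod_congr rfl fun i _ => ?_
    rw [← Finset.prod_const, ← Finset.prod_mul_distrib]
    refine Finset.prod_congr rfl fun j _ => by ring
  calc ∑ l : Fin (n+2), (-1 : R) ^ ((l : ℕ) + 1) *
          ∏ p ∈ Finset.univ.filter
              (fun p : Fin (n+2) × Fin (n+2) => p.1 < p.2 ∧ p.1 ≠ l ∧ p.2 ≠ l),
            (X p.1 - X p.2)
      = (-c) * ∑ l : Fin (n+2), (-1 : R) ^ (l : ℕ) * A l 0 * (A.submatrix l.succAbove Fin.succ).det := by
        rw [Finset.mul_sum]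
        refine Finset.sum_congr rfl fun l _ => ?_
        rw [key l, hminor l]
        have : A l 0 = 1 := by simp [hAdef]
        rw [this]
        ring
    _ = 0 := by rw [hA, mul_zero]
end

section
/- Let k ≥ 2 and let s_1, ..., s_k be pairwise distinct complex numbers. Define, for 1 ≤ l ≤ k, c_l = ∏_{r=1}^{l−1} (s_r − s_{r+1})/(s_r − s_l) (with c_1 = 1) and c'_l = (−1)^{k−l} ∏_{r=l}^{k−1} (s_r − s_{r+1})/(s_l − s_{r+1}) (with c'_k = 1). Then ∑_{l=1}^{k} c_l · c'_l = 0. -/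
/-!
Write `A = ∏_{r<k-1} (s_r - s_{r+1})`. The numerators of `c_l` and `c'_l` together form `A`,
and their denominators together form `±∏_{j ≠ l} (s_l - s_j)`, so `c_l c'_l = (-1)^(k-1) A w_l`
with `w_l` the Lagrange nodal weight of the node `s_l`. The weights sum to the coefficient of
`X^(k-1)` in the Lagrange interpolant of the constant `1`, which is `1` itself, so they sum to `0`
once `k ≥ 2`.
-/

open Finset Polynomial

theorem Lagrange.sum_nodalWeight_eq_zero {F ι : Type*} [Field F] [DecidableEq ι] {s : Finset ι}
    {v : ι → F} (hvs : Set.InjOn v s) (hs : 2 ≤ #s) :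
    ∑ i ∈ s, Lagrange.nodalWeight s v i = 0 := by
  have hdeg : (1 : F[X]).degree < #s := by
    rw [degree_one]
    exact_mod_cast (by omega : 0 < #s)
  have h := Lagrange.coeff_eq_sum hvs hdeg
  rw [coeff_one, if_neg (by omega)] at h
  simp only [eval_one, one_div] at h
  simp only [Lagrange.nodalWeight, prod_inv_distrib, h]

theorem Finset.prod_range_erase {M : Type*} [CommMonoid M] (f : ℕ → M) {l k : ℕ}
    (hlk : l < k) :
    ∏ j ∈ (range k).erase l, f j = (∏ j ∈ range l, f j) * ∏ j ∈ Ico (l + 1) k, f j := by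
  have hsplit : (range k).erase l = range l ∪ Ico (l + 1) k := by
    ext j
    simp only [mem_erase, mem_range, mem_union, mem_Ico]
    omega
  have hdisj : Disjoint (range l) (Ico (l + 1) k) := by
    simp only [disjoint_left, mem_range, mem_Ico]
    omega
  rw [hsplit, prod_union hdisj]

theorem chain_constants_mul_eq_nodalWeight {F : Type*} [Field F] (s : ℕ → F) {l k : ℕ}
    (hlk : l < k) :
    (∏ r ∈ range l, (s r - s (r + 1)) / (s r - s l)) *
        ((-1 : F) ^ (k - 1 - l) *
          ∏ r ∈ Ico l (k - 1), (s r - s (r + 1)) / (s l - s (r + 1))) =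
      (-1) ^ (k - 1) * (∏ r ∈ range (k - 1), (s r - s (r + 1))) *
        Lagrange.nodalWeight (range k) s l := by
  have hfirst : ∏ r ∈ range l, (s r - s l)⁻¹ = (-1) ^ l * ∏ r ∈ range l, (s l - s r)⁻¹ := by
    rw [← card_range l, ← prod_const, card_range, ← prod_mul_distrib]
    refine prod_congr rfl fun r _ => ?_
    rw [← neg_sub, inv_neg, neg_one_mul]
  have hlast :
      ∏ r ∈ Ico l (k - 1), (s l - s (r + 1))⁻¹ = ∏ j ∈ Ico (l + 1) k, (s l - s j)⁻¹ := by
    rw [prod_Ico_add' (fun j => (s l - s j)⁻¹), Nat.sub_add_cancel (by omega)]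
  have hsign : (-1 : F) ^ (k - 1) = (-1) ^ (k - 1 - l) * (-1) ^ l := by
    rw [← pow_add, Nat.sub_add_cancel (by omega)]
  simp only [div_eq_mul_inv, prod_mul_distrib]
  rw [Lagrange.nodalWeight, prod_range_erase _ hlk,
    ← prod_range_mul_prod_Ico _ (by omega : l ≤ k - 1), hfirst, hlast, hsign]
  ring

/-- for `k ≥ 2` and pairwise distinct complex numbers `s_1, ..., s_k`
(realized 0-based as `s 0, ..., s (k-1)`), with
`c_l = ∏_{r=1}^{l−1} (s_r − s_{r+1})/(s_r − s_l)` and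
`c'_l = (−1)^{k−l} ∏_{r=l}^{k−1} (s_r − s_{r+1})/(s_l − s_{r+1})`,
one has `∑_{l=1}^k c_l · c'_l = 0`. -/
theorem chain_constants_sum_eq_zero (k : ℕ) (hk : 2 ≤ k) (s : ℕ → ℂ)
    (hs : ∀ i j, i < k → j < k → i ≠ j → s i ≠ s j) :
    ∑ l ∈ Finset.range k,
        (∏ r ∈ Finset.range l, (s r - s (r + 1)) / (s r - s l)) *
          ((-1 : ℂ) ^ (k - 1 - l) *
            ∏ r ∈ Finset.Ico l (k - 1), (s r - s (r + 1)) / (s l - s (r + 1))) = 0 := by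
  have hinj : Set.InjOn s (range k) := fun i hi j hj hij =>
    by_contra fun hne => hs i j (mem_range.1 hi) (mem_range.1 hj) hne hij
  rw [sum_congr rfl fun l hl => chain_constants_mul_eq_nodalWeight s (mem_range.1 hl),
    ← mul_sum, Lagrange.sum_nodalWeight_eq_zero hinj (by rwa [card_range]), mul_zero]
end

section
/- Let n ≥ 1, let s_1, ..., s_n be pairwise distinct complex numbers, let x_{ji} ∈ ℂ be arbitrary for 1 ≤ i < j ≤ n, and let M and N = M^{−1} be the lower unitriangular matrices built from the chain sums with constants c and c' respectively (as below). Let D = diag(s_1, ..., s_n). Then the matrix N · D · M has entries (N D M)_{ii} = s_i, (N D M)_{ji} = (s_j − s_i) · x_{ji} for i < j, and (N D M)_{ji} = 0 for i > j. -/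
/-! The chain sums satisfy a first-step and a last-step recursion. For `M` and `N` these say
exactly that `D M = M E` and `N D = E N`, where `E` is the claimed value of `N D M`. Hence `M N`
commutes with `D`; since the `s_i` are distinct, `M N` is diagonal, and as a product of lower
unitriangular matrices it is `1`. Thus `N = M⁻¹` and `N D M = N M E = E`. -/

open Finset

/-- The product of `f a b` over consecutive pairs `(a, b)` of the list `L`
(the empty product being `1`). -/
def consecPairsProd {α : Type*} (f : α → α → ℂ) (L : List α) : ℂ :=
  ((L.zip L.tail).map fun p => f p.1 p.2).prod

/-- The sum over all strictly increasing chains `i = i_1 < i_2 < ... < i_k = j` in `Fin n`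
(equivalently, over all subsets `T` of the open interval `(i, j)`, the chain being the sorted
list of `{i} ∪ T ∪ {j}`) of the product of `f` over consecutive pairs of the chain. -/
noncomputable def chainSum {n : ℕ} (f : Fin n → Fin n → ℂ) (i j : Fin n) : ℂ :=
  ∑ T ∈ (Finset.Ioo i j).powerset,
    consecPairsProd f ((insert i (insert j T)).sort (· ≤ ·))

/-- The lower unitriangular matrix `M` of the paper (Appendix B.2), with entry in row `j`,
column `i` (for `i < j`) given by
`M_{ji} = ∑_{i = i_1 < ... < i_k = j} c(i_1,...,i_k) ∏_{l=1}^{k−1} x_{i_{l+1} i_l}`,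
where `c(i_1,...,i_k) = ∏_{l=1}^{k−1} (s_{i_l} − s_{i_{l+1}})/(s_{i_l} − s_{i_k})`. -/
noncomputable def Mmat (n : ℕ) (s : Fin n → ℂ) (x : Fin n → Fin n → ℂ) :
    Matrix (Fin n) (Fin n) ℂ :=
  Matrix.of fun j i =>
    if i = j then 1
    else if i < j then chainSum (fun a b => (s a - s b) / (s a - s j) * x b a) i j
    else 0

/-- The lower unitriangular matrix `N = M⁻¹`, defined as `M` but with `c` replaced by
`c'(i_1,...,i_k) = (−1)^{k−1} ∏_{l=1}^{k−1} (s_{i_l} − s_{i_{l+1}})/(s_{i_1} − s_{i_{l+1}})`. -/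
noncomputable def Nmat (n : ℕ) (s : Fin n → ℂ) (x : Fin n → Fin n → ℂ) :
    Matrix (Fin n) (Fin n) ℂ :=
  Matrix.of fun j i =>
    if i = j then 1
    else if i < j then chainSum (fun a b => -((s a - s b) / (s i - s b)) * x b a) i j
    else 0

theorem Finset.sort_insert_of_forall_lt {α : Type*} [LinearOrder α] {s : Finset α} {b : α}
    (h : ∀ a ∈ s, a < b) : (insert b s).sort (· ≤ ·) = s.sort (· ≤ ·) ++ [b] := by
  have hsorted := (List.toFinset_sort (· ≤ ·) (l := s.sort (· ≤ ·) ++ [b]) ?_).mpr ?_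
  · rwa [List.toFinset_append, sort_toFinset, List.toFinset_cons, List.toFinset_nil, union_comm,
      insert_union, empty_union] at hsorted
  · exact List.nodup_append.mpr ⟨sort_nodup _ _, List.nodup_singleton b,
      fun a ha c hc => by rw [List.mem_singleton.mp hc]; exact (h a ((mem_sort _).mp ha)).ne⟩
  · exact List.pairwise_append.mpr ⟨pairwise_sort _ _, List.pairwise_singleton _ _,
      fun a ha c hc => by rw [List.mem_singleton.mp hc]; exact (h a ((mem_sort _).mp ha)).le⟩

section consecPairsProd

variable {α : Type*} (f : α → α → ℂ)

theorem consecPairsProd_cons (a b : α) (l : List α) :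
    consecPairsProd f (a :: b :: l) = f a b * consecPairsProd f (b :: l) := by
  simp [consecPairsProd]

theorem consecPairsProd_append_pair (a c : α) :
    ∀ l : List α, consecPairsProd f (l ++ [a, c]) = consecPairsProd f (l ++ [a]) * f a c
  | [] => by simp [consecPairsProd]
  | [d] => by simp [consecPairsProd]
  | d :: e :: l => by
    simp only [List.cons_append, consecPairsProd_cons]
    rw [← List.cons_append, consecPairsProd_append_pair a c (e :: l), List.cons_append, mul_assoc]

variable [LinearOrder α]

theorem consecPairsProd_sort_insert_of_lt {s : Finset α} {a b : α} (hb : b ∈ s) (hab : a < b)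
    (hmin : ∀ c ∈ s, b ≤ c) :
    consecPairsProd f ((insert a s).sort (· ≤ ·)) =
      f a b * consecPairsProd f (s.sort (· ≤ ·)) := by
  have hs : s.sort (· ≤ ·) = b :: (s.erase b).sort (· ≤ ·) := by
    conv_lhs => rw [← insert_erase hb]
    exact sort_insert _ (fun c hc => hmin c (mem_of_mem_erase hc)) (notMem_erase _ _)
  have ha : a ∉ s := fun ha => (hab.trans_le (hmin a ha)).false
  rw [sort_insert _ (fun c hc => hab.le.trans (hmin c hc)) ha, hs, consecPairsProd_cons]

theorem consecPairsProd_sort_insert_of_gt {s : Finset α} {a b : α} (ha : a ∈ s) (hab : a < b)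
    (hmax : ∀ c ∈ s, c ≤ a) :
    consecPairsProd f ((insert b s).sort (· ≤ ·)) =
      consecPairsProd f (s.sort (· ≤ ·)) * f a b := by
  have hs : s.sort (· ≤ ·) = (s.erase a).sort (· ≤ ·) ++ [a] := by
    conv_lhs => rw [← insert_erase ha]
    exact sort_insert_of_forall_lt fun c hc =>
      (hmax c (mem_of_mem_erase hc)).lt_of_ne (ne_of_mem_erase hc)
  rw [sort_insert_of_forall_lt fun c hc => (hmax c hc).trans_lt hab, hs, List.append_assoc,
    List.singleton_append, consecPairsProd_append_pair]

end consecPairsProd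

section chainSum

variable {n : ℕ} (f : Fin n → Fin n → ℂ)

theorem chainSum_self (i : Fin n) : chainSum f i i = 1 := by
  simp [chainSum, consecPairsProd]

theorem chainSum_eq_sum_mul_chainSum {i j : Fin n} (hij : i < j) :
    chainSum f i j = ∑ b ∈ Ioc i j, f i b * chainSum f b j := by
  simp only [chainSum, mul_sum]
  rw [sum_sigma']
  symm
  apply sum_nbij' (fun p => (insert p.1 p.2).erase j)
    (fun T => ⟨(insert j T).min' (insert_nonempty _ _),
      T.erase ((insert j T).min' (insert_nonempty _ _))⟩)
  · rintro ⟨b, T⟩ h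
    simp only [mem_sigma, mem_powerset] at h ⊢
    grind
  · intro T h
    simp only [mem_sigma, mem_powerset] at h ⊢
    set m := (insert j T).min' (insert_nonempty _ _)
    have hm : m ∈ insert j T := min'_mem _ _
    have hmj : m ≤ j := min'_le _ _ (mem_insert_self _ _)
    have hle : ∀ a ∈ T, m ≤ a := fun a ha => min'_le _ _ (mem_insert_of_mem ha)
    clear_value m
    grind
  · rintro ⟨b, T⟩ h
    simp only [mem_sigma, mem_powerset] at h
    have hm : (insert j ((insert b T).erase j)).min' (insert_nonempty _ _) = b := by
      apply le_antisymm
      · apply min'_le; grind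
      · apply le_min'; grind
    rw [hm]
    refine Sigma.ext rfl (heq_of_eq ?_)
    grind
  · intro T h
    simp only [mem_powerset] at h
    set m := (insert j T).min' (insert_nonempty _ _)
    have hm : m ∈ insert j T := min'_mem _ _
    have hmj : m ≤ j := min'_le _ _ (mem_insert_self _ _)
    have hle : ∀ a ∈ T, m ≤ a := fun a ha => min'_le _ _ (mem_insert_of_mem ha)
    clear_value m
    grind
  · rintro ⟨b, T⟩ h
    simp only [mem_sigma, mem_powerset] at h
    have hset : insert j ((insert b T).erase j) = insert b (insert j T) := by grind
    rw [hset, consecPairsProd_sort_insert_of_lt f (s := insert b (insert j T)) (mem_insert_self _ _)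
      (mem_Ioc.1 h.1).1 (by grind)]

theorem chainSum_eq_sum_chainSum_mul {i j : Fin n} (hij : i < j) :
    chainSum f i j = ∑ a ∈ Ico i j, chainSum f i a * f a j := by
  simp only [chainSum, sum_mul]
  rw [sum_sigma']
  symm
  apply sum_nbij' (fun p => (insert p.1 p.2).erase i)
    (fun T => ⟨(insert i T).max' (insert_nonempty _ _),
      T.erase ((insert i T).max' (insert_nonempty _ _))⟩)
  · rintro ⟨a, T⟩ h
    simp only [mem_sigma, mem_powerset] at h ⊢
    grind
  · intro T h
    simp only [mem_sigma, mem_powerset] at h ⊢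
    set m := (insert i T).max' (insert_nonempty _ _)
    have hm : m ∈ insert i T := max'_mem _ _
    have him : i ≤ m := le_max' _ _ (mem_insert_self _ _)
    have hle : ∀ a ∈ T, a ≤ m := fun a ha => le_max' _ _ (mem_insert_of_mem ha)
    clear_value m
    grind
  · rintro ⟨a, T⟩ h
    simp only [mem_sigma, mem_powerset] at h
    have hm : (insert i ((insert a T).erase i)).max' (insert_nonempty _ _) = a := by
      apply le_antisymm
      · apply max'_le; grind
      · apply le_max'; grind
    rw [hm]
    refine Sigma.ext rfl (heq_of_eq ?_)
    grind
  · intro T h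
    simp only [mem_powerset] at h
    set m := (insert i T).max' (insert_nonempty _ _)
    have hm : m ∈ insert i T := max'_mem _ _
    have him : i ≤ m := le_max' _ _ (mem_insert_self _ _)
    have hle : ∀ a ∈ T, a ≤ m := fun a ha => le_max' _ _ (mem_insert_of_mem ha)
    clear_value m
    grind
  · rintro ⟨a, T⟩ h
    simp only [mem_sigma, mem_powerset] at h
    have hset : insert i (insert j ((insert a T).erase i)) = insert j (insert i (insert a T)) := by
      grind
    rw [hset, consecPairsProd_sort_insert_of_gt f (s := insert i (insert a T))
      (mem_insert_of_mem (mem_insert_self _ _)) (mem_Ico.1 h.1).2 (by grind)]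

end chainSum

namespace Matrix

theorem apply_eq_zero_of_commute_diagonal {m R : Type*} [Fintype m] [DecidableEq m]
    [CommRing R] [NoZeroDivisors R] {d : m → R} {A : Matrix m m R} (hA : Commute (diagonal d) A)
    {i j : m} (hij : d i ≠ d j) : A i j = 0 := by
  have h := congrFun₂ hA.eq i j
  rw [diagonal_mul, mul_diagonal] at h
  exact (mul_eq_zero.mp (by linear_combination h : (d i - d j) * A i j = 0)).resolve_left
    (sub_ne_zero.mpr hij)

section LowerTriangular

variable {m R : Type*} [Fintype m] [LinearOrder m] [LocallyFiniteOrder m]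
  [NonUnitalNonAssocSemiring R] {A B : Matrix m m R}

theorem IsLowerTriangular.mul_apply (hA : A.IsLowerTriangular) (hB : B.IsLowerTriangular)
    (i j : m) : (A * B) i j = ∑ k ∈ Icc j i, A i k * B k j := by
  rw [Matrix.mul_apply]
  refine (sum_subset (subset_univ _) fun k _ hk => ?_).symm
  rw [mem_Icc, not_and_or, not_le, not_le] at hk
  rcases hk with hkj | hik
  · rw [hB hkj, mul_zero]
  · rw [hA hik, zero_mul]

theorem IsLowerTriangular.mul_apply_self (hA : A.IsLowerTriangular) (hB : B.IsLowerTriangular)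
    (i : m) : (A * B) i i = A i i * B i i := by
  rw [hA.mul_apply hB, Icc_self, sum_singleton]

end LowerTriangular

end Matrix

section Conjugation

variable {n : ℕ} (s : Fin n → ℂ) (x : Fin n → Fin n → ℂ)

noncomputable def Emat : Matrix (Fin n) (Fin n) ℂ :=
  Matrix.of fun j i => if i = j then s i else if i < j then (s j - s i) * x j i else 0

theorem Emat_apply_self (i : Fin n) : Emat s x i i = s i := by
  simp [Emat]

theorem Emat_apply_of_lt {i j : Fin n} (hij : i < j) : Emat s x j i = (s j - s i) * x j i := by
  simp [Emat, hij.ne, hij]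

theorem Mmat_isLowerTriangular : (Mmat n s x).IsLowerTriangular :=
  fun j i (hji : j < i) => by simp [Mmat, hji.ne', hji.not_gt]

theorem Nmat_isLowerTriangular : (Nmat n s x).IsLowerTriangular :=
  fun j i (hji : j < i) => by simp [Nmat, hji.ne', hji.not_gt]

theorem Emat_isLowerTriangular : (Emat s x).IsLowerTriangular :=
  fun j i (hji : j < i) => by simp [Emat, hji.ne', hji.not_gt]

theorem Mmat_apply_of_le {i j : Fin n} (hij : i ≤ j) :
    Mmat n s x j i = chainSum (fun a b => (s a - s b) / (s a - s j) * x b a) i j := by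
  rcases hij.eq_or_lt with rfl | hij
  · simp [Mmat, chainSum_self]
  · simp [Mmat, hij.ne, hij]

theorem Nmat_apply_of_le {i j : Fin n} (hij : i ≤ j) :
    Nmat n s x j i = chainSum (fun a b => -((s a - s b) / (s i - s b)) * x b a) i j := by
  rcases hij.eq_or_lt with rfl | hij
  · simp [Nmat, chainSum_self]
  · simp [Nmat, hij.ne, hij]

theorem diagonal_mul_Mmat (hs : Function.Injective s) :
    Matrix.diagonal s * Mmat n s x = Mmat n s x * Emat s x := by
  ext j i
  rw [Matrix.diagonal_mul, (Mmat_isLowerTriangular s x).mul_apply (Emat_isLowerTriangular s x)]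
  rcases lt_trichotomy i j with hij | rfl | hji
  · have hsij : s i - s j ≠ 0 := sub_ne_zero.mpr (hs.ne hij.ne)
    have key : (s j - s i) * Mmat n s x j i =
        ∑ b ∈ Ioc i j, Mmat n s x j b * ((s b - s i) * x b i) := by
      rw [Mmat_apply_of_le s x hij.le, chainSum_eq_sum_mul_chainSum _ hij, mul_sum]
      refine sum_congr rfl fun b hb => ?_
      rw [Mmat_apply_of_le s x (mem_Ioc.1 hb).2]
      field_simp
      ring
    rw [Icc_eq_cons_Ioc hij.le, sum_cons, Emat_apply_self,
      sum_congr rfl fun k hk => by rw [Emat_apply_of_lt s x (mem_Ioc.1 hk).1]]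
    linear_combination key
  · rw [Icc_self, sum_singleton, Emat_apply_self, mul_comm]
  · rw [Icc_eq_empty hji.not_ge, sum_empty, Mmat_isLowerTriangular s x hji, mul_zero]

theorem Nmat_mul_diagonal (hs : Function.Injective s) :
    Nmat n s x * Matrix.diagonal s = Emat s x * Nmat n s x := by
  ext j i
  rw [Matrix.mul_diagonal, (Emat_isLowerTriangular s x).mul_apply (Nmat_isLowerTriangular s x)]
  rcases lt_trichotomy i j with hij | rfl | hji
  · have hsij : s i - s j ≠ 0 := sub_ne_zero.mpr (hs.ne hij.ne)
    have key : (s i - s j) * Nmat n s x j i =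
        ∑ a ∈ Ico i j, (s j - s a) * x j a * Nmat n s x a i := by
      rw [Nmat_apply_of_le s x hij.le, chainSum_eq_sum_chainSum_mul _ hij, mul_sum]
      refine sum_congr rfl fun a ha => ?_
      rw [Nmat_apply_of_le s x (mem_Ico.1 ha).1]
      field_simp
      ring
    rw [Icc_eq_cons_Ico hij.le, sum_cons, Emat_apply_self,
      sum_congr rfl fun k hk => by rw [Emat_apply_of_lt s x (mem_Ico.1 hk).2]]
    linear_combination key
  · rw [Icc_self, sum_singleton, Emat_apply_self, mul_comm]
  · rw [Icc_eq_empty hji.not_ge, sum_empty, Nmat_isLowerTriangular s x hji, zero_mul]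

theorem Mmat_mul_Nmat (hs : Function.Injective s) : Mmat n s x * Nmat n s x = 1 := by
  have hcomm : Commute (Matrix.diagonal s) (Mmat n s x * Nmat n s x) := by
    calc Matrix.diagonal s * (Mmat n s x * Nmat n s x)
        = Mmat n s x * (Emat s x * Nmat n s x) := by
          rw [← mul_assoc, diagonal_mul_Mmat s x hs, mul_assoc]
      _ = Mmat n s x * Nmat n s x * Matrix.diagonal s := by
          rw [← Nmat_mul_diagonal s x hs, mul_assoc]
  ext j i
  rcases eq_or_ne j i with rfl | hji
  · rw [(Mmat_isLowerTriangular s x).mul_apply_self (Nmat_isLowerTriangular s x),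
      Matrix.one_apply_eq]
    simp [Mmat, Nmat]
  · rw [Matrix.one_apply_ne hji]
    exact Matrix.apply_eq_zero_of_commute_diagonal hcomm (hs.ne hji)

end Conjugation

theorem Nmat_diag_Mmat_general (n : ℕ) (s : Fin n → ℂ)
    (hs : Function.Injective s) (x : Fin n → Fin n → ℂ) :
    Nmat n s x * Matrix.diagonal s * Mmat n s x =
      Matrix.of (fun j i : Fin n =>
        if i = j then s i
        else if i < j then (s j - s i) * x j i
        else 0) := by
  have hNM : Nmat n s x * Mmat n s x = 1 := mul_eq_one_comm.mp (Mmat_mul_Nmat s x hs)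
  calc Nmat n s x * Matrix.diagonal s * Mmat n s x
      = Nmat n s x * Mmat n s x * Emat s x := by
        rw [mul_assoc, diagonal_mul_Mmat s x hs, mul_assoc]
    _ = Emat s x := by rw [hNM, one_mul]

/-- second part of Lemma B.2: with `D = diag(s_1, ..., s_n)`, the conjugate
`N · D · M` has diagonal entries `s_i`, strictly-lower entries `(N D M)_{ji} = (s_j − s_i) x_{ji}`
for `i < j`, and vanishing strictly-upper entries. -/
theorem Nmat_diag_Mmat (n : ℕ) (hn : 1 ≤ n) (s : Fin n → ℂ)
    (hs : Function.Injective s) (x : Fin n → Fin n → ℂ) :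
    Nmat n s x * Matrix.diagonal s * Mmat n s x =
      Matrix.of (fun j i : Fin n =>
        if i = j then s i
        else if i < j then (s j - s i) * x j i
        else 0) :=
  Nmat_diag_Mmat_general n s hs x
end

section
/- Let m ≥ 1 and let x_0, ..., x_m, y_0, ..., y_m be 2m+2 pairwise distinct complex numbers. Form the (m+1)×(m+1) matrix A with A_{0,q} = 1 for all 0 ≤ q ≤ m, and A_{p,q} = (x_q − y_0)/(x_q − y_p) for 1 ≤ p ≤ m and 0 ≤ q ≤ m. Then det A ≠ 0. -/
/-!
Factoring `x q - y 0` out of column `q` turns the matrix into the Cauchy matrix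
`((y p - x q)⁻¹)`, the first row included. A kernel vector `c` of the Cauchy matrix gives the
rational function `∑ q, c q / (t - x q)` vanishing at every `y p`; in barycentric form this is
(up to the nonvanishing factor `∏ q, (t - x q)`) the Lagrange interpolant on the nodes `x q` of
the values `c q` divided by the nodal weights. Having degree below the number of its roots `y p`,
it is zero, so all `c q` vanish.
-/

open Polynomial Lagrange Finset Function

namespace Matrix

variable {F ι : Type*} [Field F] [Fintype ι] [DecidableEq ι]

def cauchy (x y : ι → F) : Matrix ι ι F :=
  of fun i j => (x i - y j)⁻¹

theorem eq_zero_of_sum_inv_sub_mul_eq_zero {x y : ι → F} (hx : Injective x) (hy : Injective y)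
    (hxy : ∀ i j, x i ≠ y j) {c : ι → F} (hc : ∀ i, ∑ j, (x i - y j)⁻¹ * c j = 0) : c = 0 := by
  set r : ι → F := fun j => c j / nodalWeight univ y j
  have hw : ∀ j, nodalWeight univ y j ≠ 0 := fun j => nodalWeight_ne_zero hy.injOn (mem_univ j)
  have hroots : ∀ i, eval (x i) (interpolate univ y r) = 0 := by
    intro i
    rw [eval_interpolate_not_at_node r fun j _ => hxy i j]
    refine mul_eq_zero_of_right _ ((sum_congr rfl fun j _ => ?_).trans (hc i))
    simp only [r]
    field_simp [hw j]
  have hzero : interpolate univ y r = 0 :=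
    eq_zero_of_degree_lt_of_eval_index_eq_zero univ hx.injOn
      (degree_interpolate_lt r hy.injOn) fun i _ => hroots i
  funext j
  have hrj := eval_interpolate_at_node r hy.injOn (mem_univ j)
  rw [hzero, eval_zero, eq_comm, div_eq_zero_iff] at hrj
  exact hrj.resolve_right (hw j)

theorem det_cauchy_ne_zero {x y : ι → F} (hx : Injective x) (hy : Injective y)
    (hxy : ∀ i j, x i ≠ y j) : (cauchy x y).det ≠ 0 := by
  rw [Ne, ← exists_mulVec_eq_zero_iff]
  rintro ⟨c, hc, hmul⟩
  refine hc (eq_zero_of_sum_inv_sub_mul_eq_zero hx hy hxy fun i => ?_)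
  simpa [cauchy, mulVec, dotProduct] using congrFun hmul i

end Matrix

theorem cauchy_type_det_ne_zero_general (m : ℕ) (x y : Fin (m + 1) → ℂ)
    (hx : Function.Injective x) (hy : Function.Injective y)
    (hxy : ∀ p q : Fin (m + 1), x p ≠ y q) :
    (Matrix.of fun p q : Fin (m + 1) =>
        if p = 0 then 1 else (x q - y 0) / (x q - y p)).det ≠ 0 := by
  have hyx : ∀ p q, y p ≠ x q := fun p q => (hxy q p).symm
  have hfactor : (Matrix.of fun p q : Fin (m + 1) =>
      if p = 0 then 1 else (x q - y 0) / (x q - y p)) =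
      Matrix.cauchy y x * Matrix.diagonal fun q => y 0 - x q := by
    ext p q
    rw [Matrix.of_apply, Matrix.cauchy, Matrix.mul_diagonal, Matrix.of_apply]
    split_ifs with hp
    · rw [hp, inv_mul_cancel₀ (sub_ne_zero.2 (hyx 0 q))]
    · rw [← neg_sub (y 0), ← neg_sub (y p), neg_div_neg_eq, div_eq_inv_mul]
  rw [hfactor, Matrix.det_mul, Matrix.det_diagonal]
  exact mul_ne_zero (Matrix.det_cauchy_ne_zero hy hx hyx)
    (prod_ne_zero_iff.2 fun q _ => sub_ne_zero.2 (hyx 0 q))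

/-- Cauchy-type determinant nonvanishing, Appendix B.5: for `m ≥ 1` and
`2m+2` pairwise distinct complex numbers `x_0, ..., x_m, y_0, ..., y_m`, the
`(m+1)×(m+1)` matrix with first row all `1`'s and entries `(x_q − y_0)/(x_q − y_p)` in row
`p ≥ 1`, column `q`, has nonzero determinant. -/
theorem cauchy_type_det_ne_zero (m : ℕ) (hm : 1 ≤ m) (x y : Fin (m + 1) → ℂ)
    (hx : Function.Injective x) (hy : Function.Injective y)
    (hxy : ∀ p q : Fin (m + 1), x p ≠ y q) :
    (Matrix.of fun p q : Fin (m + 1) =>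
        if p = 0 then 1 else (x q - y 0) / (x q - y p)).det ≠ 0 :=
  cauchy_type_det_ne_zero_general m x y hx hy hxy
end

section
/- Let m ≥ 1 and let a, b_1, ..., b_m, x_0, ..., x_m be pairwise distinct complex numbers. Form the (m+1)×(m+1) matrix A with first row A_{0,q} = 1 for all q, and A_{p,q} = (b_p − a)/(x_q − b_p) for 1 ≤ p ≤ m, 0 ≤ q ≤ m. Then det A ≠ 0. -/
/-!
A vector `v` in the left kernel of the matrix gives, for every column `q`, the relation
`v₀ + ∑ₚ vₚ (bₚ - a) / (x_q - bₚ) = 0`. Clearing denominators, the polynomial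
`v₀ ∏ₚ (X - bₚ) + ∑ₚ vₚ (bₚ - a) ∏_{p' ≠ p} (X - b_{p'})` has degree at most `m` and the `m + 1`
roots `x_q`, so it vanishes. Evaluating it at `bₚ` kills `vₚ` (as `bₚ ≠ a`), and then `v₀ = 0`.
-/

open Finset Polynomial

namespace Lagrange

variable {F ι κ : Type*} [Field F] [DecidableEq ι] {s : Finset ι} {b : ι → F}

theorem eval_interpolate_div_nodalWeight (hb : Set.InjOn b s) (w : ι → F) {x : F}
    (hx : ∀ i ∈ s, x ≠ b i) :
    (interpolate s b fun i => w i / nodalWeight s b i).eval x =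
      (nodal s b).eval x * ∑ i ∈ s, w i / (x - b i) := by
  rw [eval_interpolate_not_at_node _ hx]
  congr 1
  refine sum_congr rfl fun i hi => ?_
  have hwi := nodalWeight_ne_zero hb hi
  field_simp

theorem eq_zero_of_add_sum_div_sub_eq_zero (hb : Set.InjOn b s) {t : Finset κ} {x : κ → F}
    (hx : Set.InjOn x t) (hst : #s < #t) (hxb : ∀ q ∈ t, ∀ i ∈ s, x q ≠ b i) {c : F}
    {w : ι → F} (h : ∀ q ∈ t, c + ∑ i ∈ s, w i / (x q - b i) = 0) :
    c = 0 ∧ ∀ i ∈ s, w i = 0 := by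
  -- With these values `interpolate s b r = ∑ᵢ wᵢ ∏_{j ≠ i} (X - b j)`, by the barycentric form.
  set r : ι → F := fun i => w i / nodalWeight s b i
  set P : F[X] := c • nodal s b + interpolate s b r
  have hP_eval : ∀ q ∈ t, P.eval (x q) = 0 := fun q hq => by
    rw [eval_add, eval_smul, smul_eq_mul, eval_interpolate_div_nodalWeight hb w (hxb q hq)]
    linear_combination (nodal s b).eval (x q) * h q hq
  have hP_deg : P.degree < #t := by
    refine (degree_add_le _ _).trans_lt (max_lt ?_ ?_)
    · exact degree_smul_le c _ |>.trans_lt (by rw [degree_nodal]; exact_mod_cast hst)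
    · exact (degree_interpolate_lt r hb).trans (by exact_mod_cast hst)
  have hP : P = 0 := eq_zero_of_degree_lt_of_eval_index_eq_zero t hx hP_deg hP_eval
  have hw : ∀ i ∈ s, w i = 0 := fun i hi => by
    have := congrArg (eval (b i)) hP
    rw [eval_add, eval_smul, eval_nodal_at_node hi, smul_zero, zero_add,
      eval_interpolate_at_node r hb hi, eval_zero, div_eq_zero_iff] at this
    exact this.resolve_right (nodalWeight_ne_zero hb hi)
  have hr : interpolate s b r = 0 := by
    rw [interpolate_eq_of_values_eq_on r 0 fun i hi => by simp [r, hw i hi], map_zero]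
  have hc : c • nodal s b = 0 := by simpa [P, hr] using hP
  exact ⟨(smul_eq_zero.mp hc).resolve_right nodal_ne_zero, hw⟩

end Lagrange

theorem bordered_cauchy_det_ne_zero_general (m : ℕ) (a : ℂ) (b x : ℕ → ℂ)
    (hx : ∀ i j, i ≤ m → j ≤ m → i ≠ j → x i ≠ x j)
    (hb : ∀ i j, 1 ≤ i → i ≤ m → 1 ≤ j → j ≤ m → i ≠ j → b i ≠ b j)
    (hab : ∀ i, 1 ≤ i → i ≤ m → a ≠ b i)
    (hbx : ∀ i j, 1 ≤ i → i ≤ m → j ≤ m → b i ≠ x j) :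
    (Matrix.of fun p q : Fin (m + 1) =>
        if p = 0 then 1 else (b (p : ℕ) - a) / (x (q : ℕ) - b (p : ℕ))).det ≠ 0 := by
  rw [Ne, ← Matrix.exists_vecMul_eq_zero_iff]
  rintro ⟨v, hv_ne, hv⟩
  have hx_inj : Function.Injective fun q : Fin (m + 1) => x q := fun i j hij => by
    by_contra hne
    exact hx i j (by omega) (by omega) (Fin.val_ne_of_ne hne) hij
  have hb_inj : Function.Injective fun i : Fin m => b (i + 1) := fun i j hij => by
    by_contra hne
    exact hb _ _ (by omega) (by omega) (by omega) (by omega) (by omega) hij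
  have hcol : ∀ q : Fin (m + 1),
      v 0 + ∑ i : Fin m, v i.succ * (b (i + 1) - a) / (x q - b (i + 1)) = 0 := fun q => by
    simpa [Matrix.vecMul, dotProduct, Fin.sum_univ_succ, mul_div_assoc] using congrFun hv q
  obtain ⟨hv_zero, hv_succ⟩ := Lagrange.eq_zero_of_add_sum_div_sub_eq_zero (s := univ)
    (t := univ) hb_inj.injOn hx_inj.injOn (by simp)
    (fun q _ i _ => (hbx _ _ (by omega) (by omega) (by omega)).symm)
    fun q _ => hcol q
  refine hv_ne (funext fun p => Fin.cases hv_zero (fun i => ?_) p)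
  exact (mul_eq_zero.mp (hv_succ i (mem_univ i))).resolve_right
    (sub_ne_zero.mpr (hab _ (by omega) (by omega)).symm)

/-- STATEMENT 12 (bordered Cauchy-matrix nonvanishing, Appendix B.5): for `m ≥ 1` and
pairwise distinct complex numbers `a, b_1, ..., b_m, x_0, ..., x_m`, the `(m+1)×(m+1)`
matrix with first row all `1`'s and entries `(b_p − a)/(x_q − b_p)` in row `p ≥ 1`,
column `q`, has nonzero determinant. The numbers `b_1, ..., b_m` are realized as
`b 1, ..., b m` for `b : ℕ → ℂ`, and `x_0, ..., x_m` as `x 0, ..., x m`. -/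
theorem bordered_cauchy_det_ne_zero (m : ℕ) (hm : 1 ≤ m) (a : ℂ) (b x : ℕ → ℂ)
    (hx : ∀ i j, i ≤ m → j ≤ m → i ≠ j → x i ≠ x j)
    (hb : ∀ i j, 1 ≤ i → i ≤ m → 1 ≤ j → j ≤ m → i ≠ j → b i ≠ b j)
    (hab : ∀ i, 1 ≤ i → i ≤ m → a ≠ b i)
    (hax : ∀ i, i ≤ m → a ≠ x i)
    (hbx : ∀ i j, 1 ≤ i → i ≤ m → j ≤ m → b i ≠ x j) :
    (Matrix.of fun p q : Fin (m + 1) =>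
        if p = 0 then 1 else (b (p : ℕ) - a) / (x (q : ℕ) - b (p : ℕ))).det ≠ 0 :=
  bordered_cauchy_det_ne_zero_general m a b x hx hb hab hbx
end

section
/- Let λ, μ ∈ ℤⁿ be weakly decreasing tuples such that for every integer r, ∑_{i : λ_i ≥ r} (λ_i − r) ≤ ∑_{i : μ_i ≥ r} (μ_i − r). Then ∑_{i=1}^{k} λ_i ≤ ∑_{i=1}^{k} μ_i for every 1 ≤ k ≤ n. -/
/-- STATEMENT 14 (reverse implication of Lemma A.4): let `λ, μ ∈ ℤⁿ` be weakly decreasing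
such that for every integer `r`, `∑_{i : λ_i ≥ r} (λ_i − r) ≤ ∑_{i : μ_i ≥ r} (μ_i − r)`.
Then `∑_{i=1}^k λ_i ≤ ∑_{i=1}^k μ_i` for every `1 ≤ k ≤ n`. -/
theorem partial_sums_of_level_sums (n : ℕ) (lam mu : Fin n → ℤ)
    (hlam : Antitone lam) (hmu : Antitone mu)
    (h : ∀ r : ℤ,
        ∑ i ∈ Finset.univ.filter (fun i : Fin n => r ≤ lam i), (lam i - r) ≤
          ∑ i ∈ Finset.univ.filter (fun i : Fin n => r ≤ mu i), (mu i - r)) :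
    ∀ k : ℕ, 1 ≤ k → k ≤ n →
      ∑ i ∈ Finset.univ.filter (fun i : Fin n => (i : ℕ) < k), lam i ≤
        ∑ i ∈ Finset.univ.filter (fun i : Fin n => (i : ℕ) < k), mu i := by
  intro k hk1 hkn
  have hj : k - 1 < n := by omega
  set j : Fin n := ⟨k - 1, hj⟩ with hjdef
  set r : ℤ := mu j with hr
  set S : Finset (Fin n) := Finset.univ.filter (fun i : Fin n => (i : ℕ) < k) with hS
  -- cardinality of S
  have hcard : S.card = k := by
    have : S = Finset.Iic j := by
      ext i
      simp [hS, Fin.le_def, hjdef, Fin.val_mk]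
      omega
    rw [this, Fin.card_Iic, hjdef]
    show (k - 1) + 1 = k
    omega
  -- key 1 : sum over S of lam ≤ f_lam(r) + k * r
  have key1 : ∑ i ∈ S, lam i ≤
      (∑ i ∈ Finset.univ.filter (fun i : Fin n => r ≤ lam i), (lam i - r)) + k * r := by
    have step1 : ∑ i ∈ S, (lam i - r) ≤
        ∑ i ∈ S.filter (fun i => r ≤ lam i), (lam i - r) := by
      rw [← Finset.sum_filter_add_sum_filter_not S (fun i => r ≤ lam i)]
      have : ∑ i ∈ S.filter (fun i => ¬ r ≤ lam i), (lam i - r) ≤ 0 := by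
        apply Finset.sum_nonpos
        intro i hi
        simp only [Finset.mem_filter] at hi
        omega
      omega
    have step2 : ∑ i ∈ S.filter (fun i => r ≤ lam i), (lam i - r) ≤
        ∑ i ∈ Finset.univ.filter (fun i : Fin n => r ≤ lam i), (lam i - r) := by
      apply Finset.sum_le_sum_of_subset_of_nonneg
      · intro i hi
        simp only [Finset.mem_filter] at hi ⊢
        exact ⟨Finset.mem_univ i, hi.2⟩
      · intro i hi _
        simp only [Finset.mem_filter] at hi
        omega
    have expand : ∑ i ∈ S, lam i = (∑ i ∈ S, (lam i - r)) + k * r := by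
      rw [Finset.sum_sub_distrib, Finset.sum_const, hcard]
      ring
    omega
  -- key 2 : f_mu(r) + k * r = sum over S of mu
  have key2 : (∑ i ∈ Finset.univ.filter (fun i : Fin n => r ≤ mu i), (mu i - r)) + k * r =
      ∑ i ∈ S, mu i := by
    have heq : ∑ i ∈ Finset.univ.filter (fun i : Fin n => r ≤ mu i), (mu i - r) =
        ∑ i ∈ S, (mu i - r) := by
      symm
      apply Finset.sum_subset
      · intro i hi
        simp only [hS, Finset.mem_filter] at hi ⊢
        refine ⟨Finset.mem_univ i, ?_⟩
        exact hmu (by simp [Fin.le_def, hjdef]; omega)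
      · intro i hi hni
        simp only [hS, Finset.mem_filter, not_and, Finset.mem_univ, true_implies] at hi hni
        have : mu i ≤ r := hmu (by simp [Fin.le_def, hjdef]; omega)
        omega
    rw [heq, Finset.sum_sub_distrib, Finset.sum_const, hcard]
    ring
  calc ∑ i ∈ S, lam i ≤ _ + k * r := key1
    _ ≤ (∑ i ∈ Finset.univ.filter (fun i : Fin n => r ≤ mu i), (mu i - r)) + k * r := by
        have := h r; omega
    _ = ∑ i ∈ S, mu i := key2
end
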